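/- Let b,ℓ ≥ 1 be integers, let x, z ∈ {0,…,s−1}^ℓ be such that z_k − x_k is even for every coordinate k, and let W be a subset of the middle layer {v_{ℓ,y} : y ∈ {0,…,s−1}^ℓ} of H_{b,ℓ}. Let H' be the weighted graph obtained from H_{b,ℓ} by deleting all vertices of W (and their incident edges). If v_{ℓ,(x+z)/2} ∉ W, then the weighted distance from v_{0,x} to v_{2ℓ,z} in H' equals the weighted distance in H_{b,ℓ}. If v_{ℓ,(x+z)/2} ∈ W, then either no walk from v_{0,x} to v_{2ℓ,z} exists in H', or the weighted distance in H' is strictly greater than in H_{b,ℓ}. In particular, membership of v_{ℓ,(x+z)/2} in W is determined by x, z and the weighted distance from v_{0,x} to v_{2ℓ,z} in H'. -/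

import Mathlib

/-- The vertex set of the graph `H_{b,ℓ}`: levels `0,…,2ℓ`, each a copy of `{0,…,2^b-1}^ℓ`. -/
abbrev HVert (b ℓ : ℕ) := Fin (2 * ℓ + 1) × (Fin ℓ → Fin (2 ^ b))

/-- The (0-indexed) coordinate `c(i)` that may change on a step from level `i` to `i+1`. -/
def cidx (ℓ i : ℕ) : ℕ := if i < ℓ then i else 2 * ℓ - 1 - i

/-- `u` is one level below `v` and their coordinate vectors agree outside coordinate
`c(level of u)`. -/
def HStep {b ℓ : ℕ} (u v : HVert b ℓ) : Prop :=
  (u.1 : ℕ) + 1 = (v.1 : ℕ) ∧ ∀ k : Fin ℓ, (k : ℕ) ≠ cidx ℓ (u.1 : ℕ) → u.2 k = v.2 k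

/-- The graph `H_{b,ℓ}`. -/
def HGraph (b ℓ : ℕ) : SimpleGraph (HVert b ℓ) where
  Adj u v := HStep u v ∨ HStep v u
  symm := ⟨fun _ _ h => Or.symm h⟩
  loopless := ⟨by
    intro u h
    rcases h with h | h <;> exact absurd h.1 (by omega)⟩

/-- The weight of an edge of `H_{b,ℓ}`: `A + (difference at the changing coordinate)²`,
where `A = 3ℓs²`, `s = 2^b`.  (For adjacent vertices all other coordinates agree, so the
sum below has a single nonzero term.) -/
def HWeight {b ℓ : ℕ} (u v : HVert b ℓ) : ℕ :=
  3 * ℓ * (2 ^ b) ^ 2 + ∑ k : Fin ℓ, (((u.2 k : ℤ) - ((v.2 k : ℕ) : ℤ)).natAbs) ^ 2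

/-- The weighted length of a walk in `H_{b,ℓ}`: the sum of the weights of its edges. -/
def hwlen {b ℓ : ℕ} {u v : HVert b ℓ} (p : (HGraph b ℓ).Walk u v) : ℕ :=
  (p.darts.map (fun d => HWeight d.toProd.1 d.toProd.2)).sum

/-- The weighted distance in `H_{b,ℓ}`: the minimum weighted length of a walk. -/
noncomputable def hwdist (b ℓ : ℕ) (u v : HVert b ℓ) : ℕ :=
  sInf {L : ℕ | ∃ p : (HGraph b ℓ).Walk u v, hwlen p = L}

/-- The coordinatewise midpoint `(x+z)/2`. -/
def midVec {b ℓ : ℕ} (x z : Fin ℓ → Fin (2 ^ b)) : Fin ℓ → Fin (2 ^ b) :=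
  fun k => ⟨((x k : ℕ) + (z k : ℕ)) / 2, by
    have hx := (x k).isLt
    have hz := (z k).isLt
    omega⟩

/-- The graph obtained from `H_{b,ℓ}` by deleting all vertices in `W`. -/
def HDel (b ℓ : ℕ) (W : Set (HVert b ℓ)) : SimpleGraph ({v : HVert b ℓ | v ∉ W}) :=
  SimpleGraph.induce {v : HVert b ℓ | v ∉ W} (HGraph b ℓ)

/-- The weighted length of a walk in the deleted graph (weights inherited from `H_{b,ℓ}`). -/
def hwlenDel {b ℓ : ℕ} {W : Set (HVert b ℓ)} {u v : {v : HVert b ℓ | v ∉ W}}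
    (p : (HDel b ℓ W).Walk u v) : ℕ :=
  (p.darts.map (fun d => HWeight d.toProd.1.val d.toProd.2.val)).sum

/-- The weighted distance in the deleted graph. -/
noncomputable def hwdistDel {b ℓ : ℕ} (W : Set (HVert b ℓ))
    (u v : {v : HVert b ℓ | v ∉ W}) : ℕ :=
  sInf {L : ℕ | ∃ p : (HDel b ℓ W).Walk u v, hwlenDel p = L}

/-!
A walk from level `0` to level `2ℓ` takes at least `2ℓ` steps, and by parity either exactly `2ℓ`
or at least `2ℓ + 2`. Two extra steps cost `2A = 6ℓs²`, more than the whole quadratic part of a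
walk of length `2ℓ`, so only walks climbing one level per step matter. Such a walk changes
coordinate `k` exactly at steps `k` and `2ℓ - 1 - k`, so its weight is `2ℓA + |x - y|² + |y - z|²`,
where `v_{ℓ,y}` is its middle vertex. As `x + z = 2m` for the midpoint `m`, this equals
`2ℓA + |x - m|² + |m - z|² + 2|y - m|²`, which is minimal exactly for `y = m`. Hence deleting
middle-layer vertices keeps the distance iff `v_{ℓ,m}` survives. Otherwise the distance grows, or
no walk remains and the distance is the junk value `sInf ∅ = 0`; either way it differs.
-/

namespace Finset

theorem eq_of_forall_mem_Ico_eq_succ {α : Type*} (f : ℕ → α) {a c : ℕ} (hac : a ≤ c)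
    (h : ∀ i ∈ Ico a c, f i = f (i + 1)) : f a = f c := by
  induction c, hac using Nat.le_induction with
  | base => rfl
  | succ c hac ih =>
    exact (ih fun i hi => h i (by simp at hi ⊢; omega)).trans (h c (by simp; omega))

theorem sum_Ico_eq_of_eq_succ_of_ne {α M : Type*} [AddCommMonoid M] (d : α → α → M)
    (hd : ∀ a, d a a = 0) (f : ℕ → α) {a c j : ℕ} (hj : j ∈ Ico a c)
    (hf : ∀ i ∈ Ico a c, i ≠ j → f i = f (i + 1)) :
    ∑ i ∈ Ico a c, d (f i) (f (i + 1)) = d (f a) (f c) := by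
  rw [mem_Ico] at hj
  have hstart : f a = f j := eq_of_forall_mem_Ico_eq_succ f hj.1
    fun i hi => hf i (by simp at hi ⊢; omega) (by simp at hi; omega)
  have hend : f (j + 1) = f c := eq_of_forall_mem_Ico_eq_succ f hj.2
    fun i hi => hf i (by simp at hi ⊢; omega) (by simp at hi; omega)
  rw [sum_eq_single_of_mem j (mem_Ico.2 hj) fun i hi hij => by rw [hf i hi hij, hd],
    hstart, hend]

end Finset

namespace SimpleGraph.Walk

open Finset

variable {V : Type*} {G : SimpleGraph V}

theorem exists_length_eq_getVert_eq (g : ℕ → V) (n : ℕ)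
    (h : ∀ i < n, G.Adj (g i) (g (i + 1))) :
    ∃ p : G.Walk (g 0) (g n), p.length = n ∧ ∀ i, p.getVert i = g (min i n) := by
  induction n generalizing g with
  | zero => exact ⟨nil, rfl, fun i => by simp⟩
  | succ n ih =>
    obtain ⟨q, hq, hget⟩ := ih (fun i => g (i + 1)) fun i hi => h (i + 1) (by omega)
    refine ⟨cons (h 0 (by omega)) q, by simp [hq], ?_⟩
    rintro (_ | i)
    · simp
    · rw [getVert_cons_succ, hget]
      congr 1
      omega

theorem sum_darts_eq_sum_range {M : Type*} [AddCommMonoid M] (w : V → V → M) {u v : V}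
    (p : G.Walk u v) :
    (p.darts.map fun d => w d.toProd.1 d.toProd.2).sum =
      ∑ i ∈ range p.length, w (p.getVert i) (p.getVert (i + 1)) := by
  induction p with
  | nil => rfl
  | cons h q ih =>
    rw [length_cons, sum_range_succ', darts_cons, List.map_cons, List.sum_cons, ih, add_comm]
    simp only [getVert_cons_succ, getVert_zero]

end SimpleGraph.Walk

section SqDist

open Finset

variable {ι : Type*} [Fintype ι] {n : ℕ}

def sqDist (y y' : ι → Fin n) : ℕ := ∑ k, (((y k : ℕ) : ℤ) - (y' k : ℕ)).natAbs ^ 2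

theorem sqDist_eq_zero_iff {y y' : ι → Fin n} : sqDist y y' = 0 ↔ y = y' := by
  simp [sqDist, sum_eq_zero_iff, funext_iff, Fin.ext_iff, sub_eq_zero]

theorem sqDist_le (y y' : ι → Fin n) : sqDist y y' ≤ Fintype.card ι * n ^ 2 := by
  refine (sum_le_card_nsmul _ _ (n ^ 2) fun k _ => ?_).trans_eq (by simp)
  have := (y k).isLt
  have := (y' k).isLt
  exact Nat.pow_le_pow_left (by omega) 2

theorem cast_sqDist (y y' : ι → Fin n) :
    (sqDist y y' : ℤ) = ∑ k, (((y k : ℕ) : ℤ) - (y' k : ℕ)) ^ 2 := by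
  simp [sqDist]

theorem sqDist_add_sqDist_of_add_eq_two_mul {x z m : ι → Fin n}
    (hm : ∀ k, ((x k : ℕ) : ℤ) + (z k : ℕ) = 2 * (m k : ℕ)) (y : ι → Fin n) :
    sqDist x y + sqDist y z = sqDist x m + sqDist m z + 2 * sqDist m y := by
  zify
  simp only [cast_sqDist, mul_sum, ← sum_add_distrib]
  exact sum_congr rfl fun k _ => by linear_combination (2 * ((m k : ℕ) : ℤ) - 2 * (y k : ℕ)) * hm k

end SqDist

namespace HGraph

open SimpleGraph Finset

variable {b ℓ : ℕ} {x z : Fin ℓ → Fin (2 ^ b)}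

def baseWeight (b ℓ : ℕ) : ℕ := 3 * ℓ * (2 ^ b) ^ 2

theorem hWeight_eq (u v : HVert b ℓ) : HWeight u v = baseWeight b ℓ + sqDist u.2 v.2 := rfl

def bottom (x : Fin ℓ → Fin (2 ^ b)) : HVert b ℓ := (⟨0, Nat.succ_pos _⟩, x)

def middle (y : Fin ℓ → Fin (2 ^ b)) : HVert b ℓ :=
  (⟨ℓ, Nat.lt_succ_of_le (Nat.le_mul_of_pos_left ℓ two_pos)⟩, y)

def top (z : Fin ℓ → Fin (2 ^ b)) : HVert b ℓ := (⟨2 * ℓ, Nat.lt_succ_self _⟩, z)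

theorem level_add_one_eq_or_of_adj {u v : HVert b ℓ} (h : (HGraph b ℓ).Adj u v) :
    (u.1 : ℕ) + 1 = v.1 ∨ (v.1 : ℕ) + 1 = u.1 :=
  h.imp (·.1) (·.1)

theorem level_le_level_add_length {u v : HVert b ℓ} (p : (HGraph b ℓ).Walk u v) :
    (v.1 : ℕ) ≤ u.1 + p.length := by
  induction p with
  | nil => simp
  | cons h q ih => have := level_add_one_eq_or_of_adj h; rw [Walk.length_cons]; omega

theorem level_add_length_mod_two {u v : HVert b ℓ} (p : (HGraph b ℓ).Walk u v) :
    ((u.1 : ℕ) + p.length) % 2 = v.1 % 2 := by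
  induction p with
  | nil => simp
  | cons h q ih => have := level_add_one_eq_or_of_adj h; rw [Walk.length_cons]; omega

theorem level_getVert_of_add_length_eq {u v : HVert b ℓ} (p : (HGraph b ℓ).Walk u v)
    (hp : (u.1 : ℕ) + p.length = v.1) {i : ℕ} (hi : i ≤ p.length) :
    ((p.getVert i).1 : ℕ) = u.1 + i := by
  induction p generalizing i with
  | nil => simp_all
  | cons h q ih =>
    have := level_add_one_eq_or_of_adj h
    have := level_le_level_add_length q
    rw [Walk.length_cons] at hp hi
    cases i with
    | zero => simp
    | succ i => rw [Walk.getVert_cons_succ, ih (by omega) (by omega)]; omega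

theorem hStep_getVert_of_add_length_eq {u v : HVert b ℓ} (p : (HGraph b ℓ).Walk u v)
    (hp : (u.1 : ℕ) + p.length = v.1) {i : ℕ} (hi : i < p.length) :
    HStep (p.getVert i) (p.getVert (i + 1)) := by
  have hi' := level_getVert_of_add_length_eq p hp hi.le
  have hi1 := level_getVert_of_add_length_eq p hp (i := i + 1) hi
  exact (p.adj_getVert_succ hi).resolve_right fun h => by have := h.1; omega

theorem length_mul_baseWeight_le_hwlen {u v : HVert b ℓ} (p : (HGraph b ℓ).Walk u v) :
    p.length * baseWeight b ℓ ≤ hwlen p := by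
  rw [hwlen, Walk.sum_darts_eq_sum_range]
  calc p.length * baseWeight b ℓ = ∑ _i ∈ range p.length, baseWeight b ℓ := by simp
    _ ≤ _ := sum_le_sum fun i _ => by simp [hWeight_eq]

theorem level_getVert_of_length_eq (p : (HGraph b ℓ).Walk (bottom x) (top z))
    (hp : p.length = 2 * ℓ) {i : ℕ} (hi : i ≤ 2 * ℓ) : ((p.getVert i).1 : ℕ) = i :=
  (level_getVert_of_add_length_eq p (by change 0 + p.length = 2 * ℓ; omega) (hp ▸ hi)).trans
    (zero_add i)

theorem getVert_coord_eq_succ_of_length_eq (p : (HGraph b ℓ).Walk (bottom x) (top z))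
    (hp : p.length = 2 * ℓ) {i : ℕ} (hi : i < 2 * ℓ) {k : Fin ℓ} (hk : (k : ℕ) ≠ cidx ℓ i) :
    (p.getVert i).2 k = (p.getVert (i + 1)).2 k := by
  refine (hStep_getVert_of_add_length_eq p (by change 0 + p.length = 2 * ℓ; omega)
    (hp ▸ hi)).2 k ?_
  rwa [level_getVert_of_length_eq p hp hi.le]

theorem hwlen_eq_of_length_eq (p : (HGraph b ℓ).Walk (bottom x) (top z))
    (hp : p.length = 2 * ℓ) :
    hwlen p = 2 * ℓ * baseWeight b ℓ + sqDist x (p.getVert ℓ).2 + sqDist (p.getVert ℓ).2 z := by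
  have h2ℓ : p.getVert (2 * ℓ) = top z := hp ▸ p.getVert_length
  rw [hwlen, Walk.sum_darts_eq_sum_range, hp]
  simp only [hWeight_eq, sum_add_distrib, sum_const, card_range, smul_eq_mul, sqDist]
  rw [sum_comm, add_assoc, ← sum_add_distrib]
  congr 1
  refine sum_congr rfl fun k _ => ?_
  have hk := k.isLt
  let d : Fin (2 ^ b) → Fin (2 ^ b) → ℕ := fun s t => (((s : ℕ) : ℤ) - (t : ℕ)).natAbs ^ 2
  have hd : ∀ s, d s s = 0 := by simp [d]
  -- coordinate `k` moves only at step `k` of the first half and step `2ℓ - 1 - k` of the second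
  rw [← sum_range_add_sum_Ico _ (by omega : ℓ ≤ 2 * ℓ), range_eq_Ico,
    sum_Ico_eq_of_eq_succ_of_ne d hd (fun i => (p.getVert i).2 k) (j := k) (by simp)
      fun i hi hik => getVert_coord_eq_succ_of_length_eq p hp (by simp at hi; omega)
        (by simp at hi; simp only [cidx, if_pos hi]; omega),
    sum_Ico_eq_of_eq_succ_of_ne d hd (fun i => (p.getVert i).2 k) (j := 2 * ℓ - 1 - k)
      (by simp; omega)
      fun i hi hik => getVert_coord_eq_succ_of_length_eq p hp (by simp at hi; omega)
        (by simp at hi; simp only [cidx]; split_ifs <;> omega),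
    Walk.getVert_zero, h2ℓ]
  rfl

def route (x y z : Fin ℓ → Fin (2 ^ b)) (i : ℕ) : Fin ℓ → Fin (2 ^ b) :=
  fun k => if i ≤ k then x k else if 2 * ℓ ≤ i + k then z k else y k

theorem exists_walk_length_eq_getVert_eq (hℓ : 1 ≤ ℓ) (x y z : Fin ℓ → Fin (2 ^ b)) :
    ∃ p : (HGraph b ℓ).Walk (bottom x) (top z), p.length = 2 * ℓ ∧ p.getVert ℓ = middle y := by
  let g : ℕ → HVert b ℓ := fun i => (⟨min i (2 * ℓ), by omega⟩, route x y z (min i (2 * ℓ)))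
  have hadj : ∀ i < 2 * ℓ, (HGraph b ℓ).Adj (g i) (g (i + 1)) := by
    refine fun i hi => Or.inl ⟨by simp [g]; omega, fun k hk => ?_⟩
    have := k.isLt
    simp only [g, route, cidx] at hk ⊢
    split_ifs at hk ⊢ <;> omega
  obtain ⟨p, hp, hget⟩ := Walk.exists_length_eq_getVert_eq g (2 * ℓ) hadj
  have h0 : g 0 = bottom x := by ext <;> simp [g, bottom, route]
  have h2ℓ : g (2 * ℓ) = top z := by
    ext k
    · simp [g, top]
    · simp only [g, top, route, min_self]
      rw [if_neg (by omega), if_pos (by omega)]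
  refine ⟨p.copy h0 h2ℓ, by simpa using hp, ?_⟩
  rw [Walk.getVert_copy, hget]
  ext k
  · simp [g, middle]
    omega
  · simp only [g, middle, route, min_eq_left (by omega : ℓ ≤ 2 * ℓ)]
    rw [if_neg (by omega), if_neg (by omega)]

def optDist (b ℓ : ℕ) (x z : Fin ℓ → Fin (2 ^ b)) : ℕ :=
  2 * ℓ * baseWeight b ℓ + sqDist x (midVec x z) + sqDist (midVec x z) z

theorem optDist_pos (hℓ : 1 ≤ ℓ) : 0 < optDist b ℓ x z := by
  have : 0 < baseWeight b ℓ := by unfold baseWeight; positivity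
  unfold optDist
  positivity

theorem optDist_lt_add_two_mul_baseWeight (hℓ : 1 ≤ ℓ) :
    optDist b ℓ x z < (2 * ℓ + 2) * baseWeight b ℓ := by
  have h₁ := sqDist_le x (midVec x z)
  have h₂ := sqDist_le (midVec x z) z
  have : 0 < ℓ * (2 ^ b) ^ 2 := by positivity
  simp only [Fintype.card_fin] at h₁ h₂
  unfold optDist baseWeight
  nlinarith

theorem add_eq_two_mul_midVec (heven : ∀ k : Fin ℓ, (2 : ℤ) ∣ ((z k : ℤ) - (x k : ℤ))) (k : Fin ℓ) :
    ((x k : ℕ) : ℤ) + (z k : ℕ) = 2 * (midVec x z k : ℕ) := by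
  have := heven k
  simp only [midVec]
  omega

theorem hwlen_eq_optDist_add (heven : ∀ k : Fin ℓ, (2 : ℤ) ∣ ((z k : ℤ) - (x k : ℤ)))
    (p : (HGraph b ℓ).Walk (bottom x) (top z)) (hp : p.length = 2 * ℓ) :
    hwlen p = optDist b ℓ x z + 2 * sqDist (midVec x z) (p.getVert ℓ).2 := by
  rw [hwlen_eq_of_length_eq p hp, add_assoc,
    sqDist_add_sqDist_of_add_eq_two_mul (add_eq_two_mul_midVec heven), optDist]
  ring

theorem optDist_lt_hwlen_of_length_ne (hℓ : 1 ≤ ℓ) (p : (HGraph b ℓ).Walk (bottom x) (top z))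
    (hp : p.length ≠ 2 * ℓ) : optDist b ℓ x z < hwlen p := by
  have h₁ : 2 * ℓ ≤ 0 + p.length := level_le_level_add_length p
  have h₂ : (0 + p.length) % 2 = 2 * ℓ % 2 := level_add_length_mod_two p
  calc optDist b ℓ x z < (2 * ℓ + 2) * baseWeight b ℓ := optDist_lt_add_two_mul_baseWeight hℓ
    _ ≤ p.length * baseWeight b ℓ := Nat.mul_le_mul_right _ (by omega)
    _ ≤ hwlen p := length_mul_baseWeight_le_hwlen p

theorem optDist_le_hwlen (hℓ : 1 ≤ ℓ) (heven : ∀ k : Fin ℓ, (2 : ℤ) ∣ ((z k : ℤ) - (x k : ℤ)))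
    (p : (HGraph b ℓ).Walk (bottom x) (top z)) : optDist b ℓ x z ≤ hwlen p := by
  by_cases hp : p.length = 2 * ℓ
  · rw [hwlen_eq_optDist_add heven p hp]
    exact Nat.le_add_right _ _
  · exact (optDist_lt_hwlen_of_length_ne hℓ p hp).le

theorem optDist_lt_hwlen (hℓ : 1 ≤ ℓ) (heven : ∀ k : Fin ℓ, (2 : ℤ) ∣ ((z k : ℤ) - (x k : ℤ)))
    (p : (HGraph b ℓ).Walk (bottom x) (top z)) (hmid : middle (midVec x z) ∉ p.support) :
    optDist b ℓ x z < hwlen p := by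
  by_cases hp : p.length = 2 * ℓ
  · have hne : sqDist (midVec x z) (p.getVert ℓ).2 ≠ 0 := by
      rw [Ne, sqDist_eq_zero_iff]
      intro h
      have hget : p.getVert ℓ = middle (midVec x z) :=
        Prod.ext (Fin.ext (level_getVert_of_length_eq p hp (by omega))) h.symm
      exact hmid (hget ▸ p.getVert_mem_support ℓ)
    rw [hwlen_eq_optDist_add heven p hp]
    omega
  · exact optDist_lt_hwlen_of_length_ne hℓ p hp

theorem hwlen_eq_optDist (heven : ∀ k : Fin ℓ, (2 : ℤ) ∣ ((z k : ℤ) - (x k : ℤ)))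
    (p : (HGraph b ℓ).Walk (bottom x) (top z)) (hp : p.length = 2 * ℓ)
    (hmid : p.getVert ℓ = middle (midVec x z)) : hwlen p = optDist b ℓ x z := by
  rw [hwlen_eq_optDist_add heven p hp, hmid, middle, sqDist_eq_zero_iff.2 rfl, mul_zero,
    add_zero]

theorem hwdist_bottom_top (hℓ : 1 ≤ ℓ)
    (heven : ∀ k : Fin ℓ, (2 : ℤ) ∣ ((z k : ℤ) - (x k : ℤ))) :
    hwdist b ℓ (bottom x) (top z) = optDist b ℓ x z := by
  obtain ⟨p, hp, hmid⟩ := exists_walk_length_eq_getVert_eq hℓ x (midVec x z) z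
  refine IsLeast.csInf_eq ⟨⟨p, ?_⟩, fun _ ⟨q, hq⟩ => hq ▸ optDist_le_hwlen hℓ heven q⟩
  exact hwlen_eq_optDist heven p hp hmid

def delHom (W : Set (HVert b ℓ)) : HDel b ℓ W →g HGraph b ℓ := (Embedding.induce _).toHom

theorem hwlenDel_eq_hwlen_map {W : Set (HVert b ℓ)} {u v : {v : HVert b ℓ | v ∉ W}}
    (q : (HDel b ℓ W).Walk u v) : hwlenDel q = hwlen (q.map (delHom W)) := by
  rw [hwlen, Walk.darts_map, List.map_map]
  rfl

theorem optDist_lt_hwlenDel (hℓ : 1 ≤ ℓ)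
    (heven : ∀ k : Fin ℓ, (2 : ℤ) ∣ ((z k : ℤ) - (x k : ℤ))) {W : Set (HVert b ℓ)}
    (hmid : middle (midVec x z) ∈ W) {hx : bottom x ∉ W} {hz : top z ∉ W}
    (q : (HDel b ℓ W).Walk ⟨bottom x, hx⟩ ⟨top z, hz⟩) : optDist b ℓ x z < hwlenDel q := by
  rw [hwlenDel_eq_hwlen_map]
  refine optDist_lt_hwlen hℓ heven _ fun h => ?_
  obtain ⟨w, -, hw⟩ := List.mem_map.1 ((Walk.support_map _ _) ▸ h)
  exact w.2 (show delHom W w ∈ W from hw ▸ hmid)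

theorem optDist_lt_hwdistDel (hℓ : 1 ≤ ℓ)
    (heven : ∀ k : Fin ℓ, (2 : ℤ) ∣ ((z k : ℤ) - (x k : ℤ))) {W : Set (HVert b ℓ)}
    (hmid : middle (midVec x z) ∈ W) {hx : bottom x ∉ W} {hz : top z ∉ W}
    (hwalk : Nonempty ((HDel b ℓ W).Walk ⟨bottom x, hx⟩ ⟨top z, hz⟩)) :
    optDist b ℓ x z < hwdistDel W ⟨bottom x, hx⟩ ⟨top z, hz⟩ := by
  obtain ⟨q, hq⟩ := Nat.sInf_mem (Set.range_nonempty_iff_nonempty.2 hwalk)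
  exact (optDist_lt_hwlenDel hℓ heven hmid q).trans_eq hq

theorem hwdistDel_eq_optDist_iff (hℓ : 1 ≤ ℓ)
    (heven : ∀ k : Fin ℓ, (2 : ℤ) ∣ ((z k : ℤ) - (x k : ℤ))) {W : Set (HVert b ℓ)}
    (hW : ∀ v ∈ W, (v.1 : ℕ) = ℓ) {hx : bottom x ∉ W} {hz : top z ∉ W} :
    hwdistDel W ⟨bottom x, hx⟩ ⟨top z, hz⟩ = optDist b ℓ x z ↔ middle (midVec x z) ∉ W := by
  refine ⟨fun h hmid => ?_, fun hmid => ?_⟩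
  · rcases isEmpty_or_nonempty ((HDel b ℓ W).Walk ⟨bottom x, hx⟩ ⟨top z, hz⟩) with _ | _
    · have hzero : hwdistDel W ⟨bottom x, hx⟩ ⟨top z, hz⟩ = 0 := by simp [hwdistDel]
      exact (optDist_pos hℓ).ne' (hzero ▸ h).symm
    · exact (optDist_lt_hwdistDel hℓ heven hmid ‹_›).ne' h
  · obtain ⟨p, hp, hget⟩ := exists_walk_length_eq_getVert_eq hℓ x (midVec x z) z
    have hsupp : ∀ w ∈ p.support, w ∈ {v | v ∉ W} := by
      intro w hw hwW
      obtain ⟨i, rfl, hi⟩ := Walk.mem_support_iff_exists_getVert.1 hw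
      obtain rfl : i = ℓ := (level_getVert_of_length_eq p hp (hp ▸ hi)).symm.trans (hW _ hwW)
      exact hmid (hget ▸ hwW)
    refine IsLeast.csInf_eq ⟨⟨p.induce _ hsupp, ?_⟩, fun _ ⟨q, hq⟩ => hq ▸ ?_⟩
    · have hlift : (p.induce _ hsupp).map (delHom W) = p := p.map_induce hsupp
      exact (hwlenDel_eq_hwlen_map _).trans ((congrArg hwlen hlift).trans
        (hwlen_eq_optDist heven p hp hget))
    · rw [hwlenDel_eq_hwlen_map]
      exact optDist_le_hwlen hℓ heven _

end HGraph

/-- Deleting a set `W` of middle-layer vertices of `H_{b,ℓ}`: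
if `v_{ℓ,(x+z)/2} ∉ W` the weighted `v_{0,x}`–`v_{2ℓ,z}` distance is unchanged;
if `v_{ℓ,(x+z)/2} ∈ W` then either no walk remains or the distance strictly increases;
in particular membership of `v_{ℓ,(x+z)/2}` in `W` is determined by `x`, `z` and the
weighted distance in the deleted graph. -/
theorem middle_layer_deletion_distance (b ℓ : ℕ) (hℓ : 1 ≤ ℓ)
    (x z : Fin ℓ → Fin (2 ^ b))
    (heven : ∀ k : Fin ℓ, (2 : ℤ) ∣ ((z k : ℤ) - (x k : ℤ))) :
    (∀ W : Set (HVert b ℓ), ∀ hW : (∀ v ∈ W, (v.1 : ℕ) = ℓ),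
      (((⟨ℓ, by omega⟩ : Fin (2 * ℓ + 1)), midVec x z) ∉ W →
        hwdistDel W
          ⟨(⟨0, by omega⟩, x), fun hmem => by have := hW _ hmem; simp at this; omega⟩
          ⟨(⟨2 * ℓ, by omega⟩, z), fun hmem => by have := hW _ hmem; simp at this; omega⟩ =
          hwdist b ℓ (⟨0, by omega⟩, x) (⟨2 * ℓ, by omega⟩, z)) ∧
      (((⟨ℓ, by omega⟩ : Fin (2 * ℓ + 1)), midVec x z) ∈ W →
        IsEmpty ((HDel b ℓ W).Walk
          ⟨(⟨0, by omega⟩, x), fun hmem => by have := hW _ hmem; simp at this; omega⟩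
          ⟨(⟨2 * ℓ, by omega⟩, z), fun hmem => by have := hW _ hmem; simp at this; omega⟩) ∨
        hwdist b ℓ (⟨0, by omega⟩, x) (⟨2 * ℓ, by omega⟩, z) <
          hwdistDel W
            ⟨(⟨0, by omega⟩, x), fun hmem => by have := hW _ hmem; simp at this; omega⟩
            ⟨(⟨2 * ℓ, by omega⟩, z), fun hmem => by have := hW _ hmem; simp at this; omega⟩)) ∧
    (∀ W₁ W₂ : Set (HVert b ℓ),
      ∀ hW₁ : (∀ v ∈ W₁, (v.1 : ℕ) = ℓ), ∀ hW₂ : (∀ v ∈ W₂, (v.1 : ℕ) = ℓ),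
      hwdistDel W₁
          ⟨(⟨0, by omega⟩, x), fun hmem => by have := hW₁ _ hmem; simp at this; omega⟩
          ⟨(⟨2 * ℓ, by omega⟩, z), fun hmem => by have := hW₁ _ hmem; simp at this; omega⟩ =
        hwdistDel W₂
          ⟨(⟨0, by omega⟩, x), fun hmem => by have := hW₂ _ hmem; simp at this; omega⟩
          ⟨(⟨2 * ℓ, by omega⟩, z), fun hmem => by have := hW₂ _ hmem; simp at this; omega⟩ →
      ((((⟨ℓ, by omega⟩ : Fin (2 * ℓ + 1)), midVec x z) ∈ W₁) ↔
        (((⟨ℓ, by omega⟩ : Fin (2 * ℓ + 1)), midVec x z) ∈ W₂))) := by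
  have hdist : hwdist b ℓ (HGraph.bottom x) (HGraph.top z) = HGraph.optDist b ℓ x z :=
    HGraph.hwdist_bottom_top hℓ heven
  refine ⟨fun W hW => ⟨fun hmid => ?_, fun hmid => ?_⟩, fun W₁ W₂ hW₁ hW₂ hd => ?_⟩
  · exact ((HGraph.hwdistDel_eq_optDist_iff hℓ heven hW).2 hmid).trans hdist.symm
  · exact (isEmpty_or_nonempty _).imp_right fun hwalk =>
      hdist.trans_lt (HGraph.optDist_lt_hwdistDel hℓ heven hmid hwalk)
  · exact not_iff_not.1 <| (HGraph.hwdistDel_eq_optDist_iff hℓ heven hW₁).symm.trans <|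
      (Eq.congr_left hd).trans (HGraph.hwdistDel_eq_optDist_iff hℓ heven hW₂)
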